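/- arXiv:2605.01192 — 2 statements merged into one kernel-verified Lean document; each statement's English description precedes it below -/
import Mathlib

section
/- Let F > d ≥ 1, Ψ ∈ ℝ^{d×F}, G ∈ ℝ^{F×d}, M = GΨ with all diagonal entries equal to 1. Then the average squared off-diagonal entry (1/(F(F−1)))·∑_{i≠j} |M_{ij}|² is at least (F−d)/(d(F−1)), and consequently max_{i≠j} |M_{ij}| ≥ √((F−d)/(d(F−1))). -/
/-!
Let `P` be the orthogonal projection onto the column space of `M`. Then `M = P M`, so by
Cauchy–Schwarz `tr M = ∑ P_ij M_ji ≤ ‖P‖_F ‖M‖_F`, and `‖P‖_F² = tr P = rank M ≤ d` because `P`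
is symmetric and idempotent. A unit diagonal gives `tr M = F` and `‖M‖_F² = F + ∑_{i≠j} M_ij²`,
hence `F (F - d) ≤ d ∑_{i≠j} M_ij²`. Dividing by `F (F - 1)` is the averaged bound, and some
off-diagonal square is at least the average.
-/

open Finset Matrix

namespace Matrix

variable {m n : Type*} [Fintype m]

theorem exists_isStarProjection_mul_eq_self_trace_eq_rank [DecidableEq m] [Fintype n]
    [DecidableEq n] (M : Matrix m n ℝ) :
    ∃ P : Matrix m m ℝ, IsStarProjection P ∧ P * M = M ∧ P.trace = M.rank := by
  set V := LinearMap.range (toEuclideanLin M)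
  set P := (toEuclideanCLM (n := m) (𝕜 := ℝ)).symm V.starProjection
  have hP : toEuclideanLin P = V.starProjection := by
    rw [← coe_toEuclideanCLM_eq_toEuclideanLin, StarAlgEquiv.apply_symm_apply]
  refine ⟨P, isStarProjection_starProjection.map
    (toEuclideanCLM (n := m) (𝕜 := ℝ)).symm.toStarAlgHom, ?_, ?_⟩
  · apply toEuclideanLin.injective
    rw [toLpLin_mul_same, hP]
    ext1 x
    exact V.starProjection_eq_self_iff.mpr (LinearMap.mem_range_self _ x)
  · have hproj : LinearMap.IsProj V (V.starProjection : _ →ₗ[ℝ] _) :=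
      ⟨V.starProjection_apply_mem, fun _ => V.starProjection_eq_self_iff.mpr⟩
    rw [← trace_toLin_eq _ (EuclideanSpace.basisFun m ℝ).toBasis,
      ← toEuclideanLin_eq_toLin_orthonormal, hP, hproj.trace,
      rank_eq_finrank_range_toLin M (EuclideanSpace.basisFun m ℝ).toBasis
        (EuclideanSpace.basisFun n ℝ).toBasis, ← toEuclideanLin_eq_toLin_orthonormal]

theorem trace_sq_le_trace_mul_sum_sq {P M : Matrix m m ℝ} (hP : IsStarProjection P)
    (hPM : P * M = M) : M.trace ^ 2 ≤ P.trace * ∑ i, ∑ j, M i j ^ 2 := by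
  have hsymm (i j : m) : P j i = P i j := by
    simpa using congrFun (congrFun hP.isSelfAdjoint i) j
  have hPsq : ∑ i, ∑ j, P i j ^ 2 = P.trace := by
    conv_rhs => rw [← hP.isIdempotentElem.eq]
    simp [trace, mul_apply, sq, hsymm]
  calc M.trace ^ 2 = (∑ x : m × m, P x.1 x.2 * M x.2 x.1) ^ 2 := by
        rw [Fintype.sum_prod_type]
        conv_lhs => rw [← hPM]
        rfl
    _ ≤ (∑ x : m × m, P x.1 x.2 ^ 2) * ∑ x : m × m, M x.2 x.1 ^ 2 :=
        sum_mul_sq_le_sq_mul_sq _ _ _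
    _ = P.trace * ∑ i, ∑ j, M i j ^ 2 := by
        rw [Fintype.sum_prod_type, Fintype.sum_prod_type, hPsq, sum_comm]

variable [DecidableEq m]

theorem trace_sq_le_rank_mul_sum_sq (M : Matrix m m ℝ) :
    M.trace ^ 2 ≤ M.rank * ∑ i, ∑ j, M i j ^ 2 := by
  obtain ⟨P, hP, hPM, htrace⟩ := M.exists_isStarProjection_mul_eq_self_trace_eq_rank
  simpa only [htrace] using trace_sq_le_trace_mul_sum_sq hP hPM

theorem sum_sq_eq_sum_diag_sq_add_sum_offDiag_sq (M : Matrix m m ℝ) :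
    ∑ i, ∑ j, M i j ^ 2 =
      ∑ i, M i i ^ 2 + ∑ i, ∑ j ∈ univ.filter (fun j => j ≠ i), |M i j| ^ 2 := by
  rw [← sum_add_distrib]
  refine sum_congr rfl fun i _ => ?_
  simp only [filter_ne', sq_abs]
  exact (add_sum_erase _ _ (mem_univ i)).symm

theorem card_mul_sub_rank_le_rank_mul_sum_offDiag_sq {M : Matrix m m ℝ}
    (hdiag : ∀ i, M i i = 1) :
    (Fintype.card m : ℝ) * (Fintype.card m - M.rank) ≤
      M.rank * ∑ i, ∑ j ∈ univ.filter (fun j => j ≠ i), |M i j| ^ 2 := by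
  have h := M.trace_sq_le_rank_mul_sum_sq
  simp only [sum_sq_eq_sum_diag_sq_add_sum_offDiag_sq, trace, Matrix.diag, hdiag, one_pow,
    sum_const, card_univ, nsmul_eq_mul, mul_one] at h
  linarith

theorem exists_sqrt_le_abs_of_mul_le_sum_offDiag_sq {M : Matrix m m ℝ} {c : ℝ}
    (hm : 1 < Fintype.card m)
    (h : c * (Fintype.card m * (Fintype.card m - 1)) ≤
      ∑ i, ∑ j ∈ univ.filter (fun j => j ≠ i), |M i j| ^ 2) :
    ∃ i j, i ≠ j ∧ √c ≤ |M i j| := by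
  have hsum : ∑ i : m, ∑ j ∈ univ.filter (fun j => j ≠ i), c ≤
      ∑ i, ∑ j ∈ univ.filter (fun j => j ≠ i), |M i j| ^ 2 := by
    simpa [filter_ne', Nat.cast_sub hm.le, mul_left_comm, mul_comm] using h
  have hne (i : m) : (univ.filter (fun j => j ≠ i)).Nonempty := by
    obtain ⟨j, hj⟩ := Fintype.exists_ne_of_one_lt_card hm i
    exact ⟨j, mem_filter.2 ⟨mem_univ j, hj⟩⟩
  have : Nonempty m := Fintype.card_pos_iff.mp hm.le
  obtain ⟨i, -, hi⟩ := exists_le_of_sum_le univ_nonempty hsum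
  obtain ⟨j, hj, hij⟩ := exists_le_of_sum_le (hne i) hi
  refine ⟨i, j, (mem_filter.1 hj).2.symm, ?_⟩
  simpa [Real.sqrt_sq_eq_abs] using Real.sqrt_le_sqrt hij

end Matrix

theorem welch_floor (F d : ℕ) (hd : 1 ≤ d) (hdF : d < F)
    (Ψ : Matrix (Fin d) (Fin F) ℝ) (G : Matrix (Fin F) (Fin d) ℝ)
    (M : Matrix (Fin F) (Fin F) ℝ) (hM : M = G * Ψ)
    (hdiag : ∀ i, M i i = 1) :
    (((F : ℝ) - d) / (d * ((F : ℝ) - 1)) ≤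
      (1 / ((F : ℝ) * ((F : ℝ) - 1))) *
        ∑ i : Fin F, ∑ j ∈ univ.filter (fun j => j ≠ i), |M i j| ^ 2)
    ∧ ∃ i j : Fin F, i ≠ j ∧
        Real.sqrt (((F : ℝ) - d) / (d * ((F : ℝ) - 1))) ≤ |M i j| := by
  set S := ∑ i : Fin F, ∑ j ∈ univ.filter (fun j => j ≠ i), |M i j| ^ 2
  have hd' : (1 : ℝ) ≤ d := by exact_mod_cast hd
  have hdF' : (d : ℝ) + 1 ≤ F := by exact_mod_cast hdF
  have hrank : (M.rank : ℝ) ≤ d := by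
    rw [hM]
    exact_mod_cast (rank_mul_le_left G Ψ).trans (rank_le_width G)
  have hFd : (F : ℝ) * (F - d) ≤ d * S := by
    have h := card_mul_sub_rank_le_rank_mul_sum_offDiag_sq hdiag
    rw [Fintype.card_fin] at h
    nlinarith [mul_le_mul_of_nonneg_right hrank (by positivity : (0 : ℝ) ≤ F + S)]
  have hcS : (F - d) / (d * (F - 1)) * (F * (F - 1)) ≤ S := by
    rw [div_mul_eq_mul_div, div_le_iff₀ (by nlinarith)]
    linarith [mul_le_mul_of_nonneg_right hFd (by linarith : (0 : ℝ) ≤ F - 1)]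
  refine ⟨?_, exists_sqrt_le_abs_of_mul_le_sum_offDiag_sq
    (by rw [Fintype.card_fin]; omega) (by rwa [Fintype.card_fin])⟩
  rw [one_div_mul_eq_div, le_div_iff₀ (by nlinarith)]
  exact hcS
end

section
/- Let F > d, let y_1,…,y_F ∈ ℝ^d, and let G ∈ ℝ^{F×d} satisfy ‖G y_i − e_i‖_∞ ≤ δ for all i, where e_i is the i-th standard basis vector of ℝ^F and 0 ≤ δ < 1/2. Then δ/(1−δ) ≥ √((F−d)/(d(F−1))). -/
/-!
Write `M = GY` for the matrix with entries `M i j = (G y_i) j`, so that `rank M ≤ d` and `M` is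
entrywise `δ`-close to the identity. Dividing each row by its diagonal entry (at least `1 - δ > 0`)
gives a unit-diagonal matrix `C` of rank at most `d` whose off-diagonal entries are bounded by
`ε = δ / (1 - δ)`. Welch's argument: with `P` the orthogonal projection onto the column space of
`C` we have `PC = C`, so `F = tr C = ⟨P, C⟩ ≤ ‖P‖_F ‖C‖_F = √(rank C) ‖C‖_F`, while
`‖C‖_F² ≤ F (1 + (F - 1) ε²)`; hence `F - d ≤ d (F - 1) ε²`.
-/

open Finset Matrix Module
open scoped RealInnerProductSpace

theorem OrthonormalBasis.sq_sum_inner_le_finrank_mul_sum_sq_norm {ι E : Type*} [Fintype ι]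
    [NormedAddCommGroup E] [InnerProductSpace ℝ E] [FiniteDimensional ℝ E]
    (e : OrthonormalBasis ι ℝ E) (V : Submodule ℝ E) {c : ι → E} (hc : ∀ i, c i ∈ V) :
    (∑ i, ⟪e i, c i⟫) ^ 2 ≤ finrank ℝ V * ∑ i, ‖c i‖ ^ 2 := by
  let b := stdOrthonormalBasis ℝ V
  have hexpand : ∀ i, ⟪e i, c i⟫ = ∑ j, ⟪e i, (b j : E)⟫ * ⟪(b j : E), c i⟫ := by
    intro i
    have hc' : ∑ j, ⟪(b j : E), c i⟫ • (b j : E) = c i := by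
      simpa [Submodule.coe_inner] using congrArg Subtype.val (b.sum_repr' ⟨c i, hc i⟩)
    conv_lhs => rw [← hc', inner_sum]
    simp only [inner_smul_right, mul_comm]
  have hbasis : ∑ j, ∑ i, ⟪e i, (b j : E)⟫ ^ 2 = finrank ℝ V := by
    have hunit : ∀ j, ‖(b j : E)‖ = 1 := b.norm_eq_one
    simp [e.sum_sq_inner_right, hunit]
  have hcoords : ∀ i, ∑ j, ⟪(b j : E), c i⟫ ^ 2 = ‖c i‖ ^ 2 := fun i => by
    simpa [Submodule.coe_inner] using b.sum_sq_inner_right ⟨c i, hc i⟩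
  calc (∑ i, ⟪e i, c i⟫) ^ 2
      = (∑ p : ι × Fin (finrank ℝ V), ⟪e p.1, (b p.2 : E)⟫ * ⟪(b p.2 : E), c p.1⟫) ^ 2 := by
        simp only [hexpand, Fintype.sum_prod_type]
    _ ≤ (∑ p : ι × Fin (finrank ℝ V), ⟪e p.1, (b p.2 : E)⟫ ^ 2) *
          ∑ p : ι × Fin (finrank ℝ V), ⟪(b p.2 : E), c p.1⟫ ^ 2 :=
        sum_mul_sq_le_sq_mul_sq _ _ _
    _ = finrank ℝ V * ∑ i, ‖c i‖ ^ 2 := by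
        rw [Fintype.sum_prod_type, Fintype.sum_prod_type, sum_comm, hbasis]
        simp only [hcoords]

theorem Matrix.trace_sq_le_rank_mul_sum_sq_s4 {n : Type*} [Fintype n] [DecidableEq n]
    (C : Matrix n n ℝ) : C.trace ^ 2 ≤ C.rank * ∑ i, ∑ j, C i j ^ 2 := by
  let e := EuclideanSpace.basisFun n ℝ
  let T := toLin e.toBasis e.toBasis C
  have hcol : ∀ i, T (e i) = ∑ j, C j i • e j := fun i => by
    simpa [T] using toLin_self e.toBasis e.toBasis C i
  have hdiag : ∀ i, ⟪e i, T (e i)⟫ = C i i := fun i => by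
    rw [hcol]; exact e.orthonormal.inner_right_fintype _ i
  have hnorm : ∀ i, ‖T (e i)‖ ^ 2 = ∑ j, C j i ^ 2 := fun i => by
    rw [← e.sum_sq_inner_right, hcol]
    simp only [e.orthonormal.inner_right_fintype]
  have hwelch := e.sq_sum_inner_le_finrank_mul_sum_sq_norm (LinearMap.range T)
    (c := fun i => T (e i)) (fun i => LinearMap.mem_range_self T _)
  rw [rank_eq_finrank_range_toLin C e.toBasis e.toBasis, trace, sum_comm]
  simpa [hdiag, hnorm] using hwelch

theorem Matrix.sum_sq_le_of_diag_eq_one {n : Type*} [Fintype n] [DecidableEq n]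
    (C : Matrix n n ℝ) {ε : ℝ} (hdiag : ∀ i, C i i = 1) (hoff : ∀ i j, i ≠ j → |C i j| ≤ ε) :
    ∑ i, ∑ j, C i j ^ 2 ≤ Fintype.card n * (1 + (Fintype.card n - 1) * ε ^ 2) := by
  have hrow : ∀ i, ∑ j, C i j ^ 2 ≤ 1 + (Fintype.card n - 1) * ε ^ 2 := by
    intro i
    rw [← add_sum_erase _ _ (mem_univ i), hdiag, one_pow]
    gcongr
    calc ∑ j ∈ univ.erase i, C i j ^ 2 ≤ ∑ _j ∈ univ.erase i, ε ^ 2 := by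
          refine sum_le_sum fun j hj => ?_
          obtain ⟨hlo, hhi⟩ := abs_le.mp (hoff i j (ne_of_mem_erase hj).symm)
          exact sq_le_sq' hlo hhi
      _ = (Fintype.card n - 1) * ε ^ 2 := by
          rw [sum_const, nsmul_eq_mul, cast_card_erase_of_mem (mem_univ i), card_univ]
  calc ∑ i, ∑ j, C i j ^ 2 ≤ ∑ _i : n, (1 + (Fintype.card n - 1) * ε ^ 2) :=
        sum_le_sum fun i _ => hrow i
    _ = _ := by rw [sum_const, card_univ, nsmul_eq_mul]

theorem Matrix.welch_bound {n : Type*} [Fintype n] [DecidableEq n] [Nonempty n]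
    (C : Matrix n n ℝ) (d : ℕ) (hrank : C.rank ≤ d) {ε : ℝ} (hε : 0 ≤ ε)
    (hdiag : ∀ i, C i i = 1) (hoff : ∀ i j, i ≠ j → |C i j| ≤ ε) :
    √((Fintype.card n - d) / (d * (Fintype.card n - 1))) ≤ ε := by
  set F : ℝ := (Fintype.card n : ℝ)
  have hF : 1 ≤ F := Nat.one_le_cast.mpr Fintype.card_pos
  have htrace : C.trace = F := by simp [trace, hdiag, F]
  have hsq : F ^ 2 ≤ d * (F * (1 + (F - 1) * ε ^ 2)) := calc
    F ^ 2 = C.trace ^ 2 := by rw [htrace]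
    _ ≤ C.rank * ∑ i, ∑ j, C i j ^ 2 := C.trace_sq_le_rank_mul_sum_sq_s4
    _ ≤ d * (F * (1 + (F - 1) * ε ^ 2)) := mul_le_mul (Nat.cast_le.mpr hrank)
        (C.sum_sq_le_of_diag_eq_one hdiag hoff) (by positivity) (by positivity)
  have hlin : F - d ≤ ε ^ 2 * (d * (F - 1)) := by nlinarith
  rw [Real.sqrt_le_left hε]
  exact div_le_of_le_mul₀ (mul_nonneg d.cast_nonneg (by linarith)) (sq_nonneg ε) hlin

theorem Matrix.welch_bound_of_abs_sub_one_le {n : Type*} [Fintype n] [DecidableEq n] [Nonempty n]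
    (M : Matrix n n ℝ) (d : ℕ) (hrank : M.rank ≤ d) {δ : ℝ} (hδ0 : 0 ≤ δ) (hδ : δ < 1)
    (happrox : ∀ i j, |M i j - (1 : Matrix n n ℝ) i j| ≤ δ) :
    √((Fintype.card n - d) / (d * (Fintype.card n - 1))) ≤ δ / (1 - δ) := by
  have hMdiag : ∀ i, 1 - δ ≤ M i i := fun i => by
    have := happrox i i
    rw [one_apply_eq] at this
    linarith [(abs_le.mp this).1]
  have hMpos : ∀ i, 0 < M i i := fun i => by linarith [hMdiag i]
  set C := diagonal (fun i => (M i i)⁻¹) * M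
  have hC : ∀ i j, C i j = M i j / M i i := fun i j => by simp [C, div_eq_inv_mul]
  refine C.welch_bound d ((rank_mul_le_right _ _).trans hrank) (by bound) ?_ ?_
  · intro i
    rw [hC, div_self (hMpos i).ne']
  · intro i j hij
    have := happrox i j
    rw [one_apply_ne hij, sub_zero] at this
    rw [hC, abs_div, abs_of_pos (hMpos i)]
    exact div_le_div₀ hδ0 this (by linarith) (hMdiag i)

theorem no_better_than_welch_reset_general (F d : ℕ) (hdF : d < F)
    (y : Fin F → (Fin d → ℝ)) (G : Matrix (Fin F) (Fin d) ℝ)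
    (δ : ℝ) (hδ0 : 0 ≤ δ) (hδ : δ < 1 / 2)
    (happrox : ∀ i j, |G.mulVec (y i) j - (if j = i then (1 : ℝ) else 0)| ≤ δ) :
    Real.sqrt (((F : ℝ) - d) / (d * ((F : ℝ) - 1))) ≤ δ / (1 - δ) := by
  have : Nonempty (Fin F) := ⟨⟨0, by omega⟩⟩
  set M : Matrix (Fin F) (Fin F) ℝ := of y * Gᵀ
  have hM : ∀ i j, M i j = G.mulVec (y i) j := fun i j => by
    simp [M, mul_apply, mulVec, dotProduct, mul_comm]
  have hrank : M.rank ≤ d := (rank_mul_le_left _ _).trans (rank_le_width _)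
  simpa using M.welch_bound_of_abs_sub_one_le d hrank hδ0 (by linarith) fun i j => by
    simpa [hM, one_apply, eq_comm] using happrox i j

theorem no_better_than_welch_reset (F d : ℕ) (hd : 1 ≤ d) (hdF : d < F)
    (y : Fin F → (Fin d → ℝ)) (G : Matrix (Fin F) (Fin d) ℝ)
    (δ : ℝ) (hδ0 : 0 ≤ δ) (hδ : δ < 1 / 2)
    (happrox : ∀ i j, |G.mulVec (y i) j - (if j = i then (1 : ℝ) else 0)| ≤ δ) :
    Real.sqrt (((F : ℝ) - d) / (d * ((F : ℝ) - 1))) ≤ δ / (1 - δ) :=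
  no_better_than_welch_reset_general F d hdF y G δ hδ0 hδ happrox
end
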